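/- arXiv:1006.5723 — 8 statements merged into one kernel-verified Lean document; each statement's English description precedes it below -/
import Mathlib

section
/- If J is an attractive interaction map, then J(a,b) is non-decreasing in b for each fixed a; that is, b1 ≤ b2 implies J(a,b1) ≤ J(a,b2). -/
/-- An interaction map `J` on `S = {0,…,n}` is attractive if it is non-decreasing on its up
set and its down set, and satisfies the two mixed conditions. -/
def Attractive {n : ℕ} (J : Fin (n+1) → Fin (n+1) → Fin (n+1)) : Prop :=
  (∀ a₁ b₁ a₂ b₂ : Fin (n+1), a₁ ≤ a₂ → b₁ ≤ b₂ →
    a₁ < J a₁ b₁ → a₂ < J a₂ b₂ → J a₁ b₁ ≤ J a₂ b₂) ∧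
  (∀ a₁ b₁ a₂ b₂ : Fin (n+1), a₁ ≤ a₂ → b₁ ≤ b₂ →
    J a₁ b₁ < a₁ → J a₂ b₂ < a₂ → J a₁ b₁ ≤ J a₂ b₂) ∧
  (∀ a₁ b₁ a₂ b₂ : Fin (n+1), a₁ ≤ a₂ → b₁ ≤ b₂ →
    a₁ < J a₁ b₁ → J a₂ b₂ ≤ a₂ → J a₁ b₁ ≤ a₂) ∧
  (∀ a₁ b₁ a₂ b₂ : Fin (n+1), a₁ ≤ a₂ → b₁ ≤ b₂ →
    a₁ ≤ J a₁ b₁ → J a₂ b₂ < a₂ → a₁ ≤ J a₂ b₂)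

/-- An attractive interaction map is non-decreasing in its second argument. -/
theorem stmt_2 {n : ℕ} (J : Fin (n+1) → Fin (n+1) → Fin (n+1)) (hJ : Attractive J)
    (a b₁ b₂ : Fin (n+1)) (hb : b₁ ≤ b₂) : J a b₁ ≤ J a b₂ := by
  obtain ⟨hU, hD, hUD, hND⟩ := hJ
  rcases lt_trichotomy (J a b₁) a with h1 | h1 | h1
  · rcases lt_or_ge (J a b₂) a with h2 | h2
    · exact hD a b₁ a b₂ le_rfl hb h1 h2
    · exact le_trans h1.le h2
  · rcases lt_or_ge (J a b₂) a with h2 | h2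
    · rw [h1]; exact hND a b₁ a b₂ le_rfl hb h1.ge h2
    · exact le_trans h1.le h2
  · rcases lt_or_ge a (J a b₂) with h2 | h2
    · exact hU a b₁ a b₂ le_rfl hb h1 h2
    · have h3 : J a b₁ ≤ a := hUD a b₁ a b₂ le_rfl hb h1 h2
      rcases lt_or_eq_of_le h2 with h4 | h4
      · exact le_trans h3 (hND a b₁ a b₂ le_rfl hb h1.le h4)
      · rw [h4]; exact h3
end

section
/- Let J be an attractive interaction map on S = {0,...,n} and let η, ξ : Λ → S be configurations with η ≤ ξ pointwise. Fix sites x, y. If both single-site updates at x are up transitions, i.e., η(x) < J(η(x),η(y)) and ξ(x) < J(ξ(x),ξ(y)), then J(η(x),η(y)) ≤ J(ξ(x),ξ(y)); consequently, the simultaneously updated configurations η^{xy} and ξ^{xy} satisfy η^{xy} ≤ ξ^{xy}. -/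
/-- If both updates at x are up transitions, the updated values are ordered and the
simultaneously updated configurations remain ordered. -/
theorem stmt_6 {n : ℕ} {Λ : Type*} [DecidableEq Λ]
    (J : Fin (n+1) → Fin (n+1) → Fin (n+1)) (hJ : Attractive J)
    (η ξ : Λ → Fin (n+1)) (hle : ∀ z, η z ≤ ξ z) (x y : Λ)
    (h1 : η x < J (η x) (η y)) (h2 : ξ x < J (ξ x) (ξ y)) :
    J (η x) (η y) ≤ J (ξ x) (ξ y) ∧
    ∀ z, Function.update η x (J (η x) (η y)) z ≤ Function.update ξ x (J (ξ x) (ξ y)) z := by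
  have key := hJ.1 (η x) (η y) (ξ x) (ξ y) (hle x) (hle y) h1 h2
  refine ⟨key, fun z => ?_⟩
  by_cases hz : z = x
  · subst hz; simpa using key
  · simpa [Function.update, hz] using hle z
end

section
/- Let J be an attractive interaction map on S = {0,...,n} and η ≤ ξ configurations. If the update in η at x is up or null (η(x) ≤ J(η(x),η(y))) while the update in ξ at x is a down transition (J(ξ(x),ξ(y)) < ξ(x)), then η(x) ≤ J(ξ(x),ξ(y)); hence η ≤ ξ^{xy}, i.e., updating only the upper configuration cannot break the order. -/
/-- If the update in the lower configuration is up or null while the update in the upper one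
is down, then updating only the upper configuration cannot break the order. -/
theorem stmt_9 {n : ℕ} {Λ : Type*} [DecidableEq Λ]
    (J : Fin (n+1) → Fin (n+1) → Fin (n+1)) (hJ : Attractive J)
    (η ξ : Λ → Fin (n+1)) (hle : ∀ z, η z ≤ ξ z) (x y : Λ)
    (h1 : η x ≤ J (η x) (η y)) (h2 : J (ξ x) (ξ y) < ξ x) :
    η x ≤ J (ξ x) (ξ y) ∧
    ∀ z, η z ≤ Function.update ξ x (J (ξ x) (ξ y)) z := by
  have key : η x ≤ J (ξ x) (ξ y) :=
    hJ.2.2.2 (η x) (η y) (ξ x) (ξ y) (hle x) (hle y) h1 h2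
  refine ⟨key, fun z => ?_⟩
  by_cases hz : z = x
  · subst hz; simpa using key
  · simp [Function.update, hz, hle z]
end

section
/- Consider the discrete-time coupled update dynamics: at a step with sites (x,y), from a pair of configurations (η,ξ) with η ≤ ξ, one of the following transitions occurs subject to the constraints: (i) a joint update (η^{xy}, ξ^{xy}) is allowed only if both updates are up transitions or both are down transitions; (ii) an update (η^{xy}, ξ) of the lower configuration alone is forbidden whenever ξ(x) < J(η(x),η(y)) (by the rate condition r_{1u}(η,x,y) ≤ r_{2u}(ξ,x,y) forcing this rate to zero); (iii) an update (η, ξ^{xy}) of the upper configuration alone is forbidden whenever J(ξ(x),ξ(y)) < η(x). If J is attractive, then every allowed transition maps ordered pairs to ordered pairs: the resulting pair still satisfies the pointwise order. -/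
/-- Every allowed transition of the coupled update dynamics maps ordered pairs of
configurations to ordered pairs: (i) joint updates are allowed only when both are up or both
are down; (ii) a lower-only update is allowed only when the result cannot jump above the
upper configuration; (iii) an upper-only update is allowed only when the result cannot jump
below the lower configuration. -/
theorem stmt_10 {n : ℕ} {Λ : Type*} [DecidableEq Λ]
    (J : Fin (n+1) → Fin (n+1) → Fin (n+1)) (hJ : Attractive J)
    (η ξ : Λ → Fin (n+1)) (hle : ∀ z, η z ≤ ξ z) (x y : Λ) :
    (((η x < J (η x) (η y) ∧ ξ x < J (ξ x) (ξ y)) ∨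
      (J (η x) (η y) < η x ∧ J (ξ x) (ξ y) < ξ x)) →
      ∀ z, Function.update η x (J (η x) (η y)) z ≤ Function.update ξ x (J (ξ x) (ξ y)) z) ∧
    (¬ (ξ x < J (η x) (η y)) →
      ∀ z, Function.update η x (J (η x) (η y)) z ≤ ξ z) ∧
    (¬ (J (ξ x) (ξ y) < η x) →
      ∀ z, η z ≤ Function.update ξ x (J (ξ x) (ξ y)) z) := by
  obtain ⟨h1, h2, h3, h4⟩ := hJ
  refine ⟨?_, ?_, ?_⟩
  · rintro (⟨hu1, hu2⟩ | ⟨hd1, hd2⟩) z <;>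
    · rcases eq_or_ne z x with rfl | hz
      · simp only [Function.update_self]
        first
        | exact h1 _ _ _ _ (hle z) (hle y) hu1 hu2
        | exact h2 _ _ _ _ (hle z) (hle y) hd1 hd2
      · simp [Function.update_of_ne hz]; exact hle z
  · intro h z
    rcases eq_or_ne z x with rfl | hz
    · simpa using le_of_not_gt h
    · simpa [Function.update_of_ne hz] using hle z
  · intro h z
    rcases eq_or_ne z x with rfl | hz
    · simpa using le_of_not_gt h
    · simpa [Function.update_of_ne hz] using hle z
end

section
/- Suppose J : S × S → S satisfies: for all a ≤ a' and b ≤ b' in S and all thresholds c ∈ S, (i) if a, a' < c and J(a,b) ≥ c then J(a',b') ≥ c, and (ii) if a, a' ≥ c and J(a',b') < c then J(a,b) < c. Then J is an attractive interaction map, i.e., it satisfies the four conditions: non-decreasing on up pairs, non-decreasing on down pairs, and the two mixed conditions. -/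
/-- The threshold-crossing conditions derived from monotonicity imply attractiveness of the
interaction map. -/
theorem stmt_12 {n : ℕ} (J : Fin (n+1) → Fin (n+1) → Fin (n+1))
    (h : ∀ a a' b b' c : Fin (n+1), a ≤ a' → b ≤ b' →
      ((a < c → a' < c → c ≤ J a b → c ≤ J a' b') ∧
       (c ≤ a → c ≤ a' → J a' b' < c → J a b < c))) :
    Attractive J := by
  refine ⟨?_, ?_, ?_, ?_⟩
  · intro a₁ b₁ a₂ b₂ ha hb h1 h2
    by_contra hc
    push_neg at hc
    exact absurd ((h a₁ a₂ b₁ b₂ (J a₁ b₁) ha hb).1 h1 (h2.trans hc) le_rfl) (not_le.mpr hc)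
  · intro a₁ b₁ a₂ b₂ ha hb h1 h2
    by_contra hc
    push_neg at hc
    exact absurd ((h a₁ a₂ b₁ b₂ (J a₁ b₁) ha hb).2 h1.le (h1.le.trans ha) hc) (lt_irrefl _)
  · intro a₁ b₁ a₂ b₂ ha hb h1 h2
    by_contra hc
    push_neg at hc
    exact absurd (((h a₁ a₂ b₁ b₂ (J a₁ b₁) ha hb).1 h1 hc le_rfl).trans h2) (not_le.mpr hc)
  · intro a₁ b₁ a₂ b₂ ha hb h1 h2
    by_contra hc
    push_neg at hc
    exact absurd ((h a₁ a₂ b₁ b₂ a₁ ha hb).2 le_rfl ha hc) (not_lt.mpr h1)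
end

section
/- Conversely to the previous statement: if J is an attractive interaction map on S, then for all a ≤ a', b ≤ b' and all c ∈ S: (i) if a ≤ a' < c and J(a,b) ≥ c then J(a',b') ≥ c; (ii) if c ≤ a ≤ a' and J(a',b') < c then J(a,b) < c. In particular, attractiveness of J is equivalent to these threshold-crossing conditions. -/
/-- An interaction map is attractive if and only if it satisfies the threshold-crossing
conditions: (i) if a ≤ a' < c and J a b ≥ c then J a' b' ≥ c; (ii) if c ≤ a ≤ a' and
J a' b' < c then J a b < c. -/
theorem stmt_13 {n : ℕ} (J : Fin (n+1) → Fin (n+1) → Fin (n+1)) :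
    Attractive J ↔
      (∀ a a' b b' c : Fin (n+1), a ≤ a' → b ≤ b' →
        ((a' < c → c ≤ J a b → c ≤ J a' b') ∧
         (c ≤ a → J a' b' < c → J a b < c))) := by
  constructor
  · rintro ⟨hU, hD, hUD, hND⟩ a a' b b' c hab hbb
    constructor
    · intro hac hcJ
      have haU : a < J a b := lt_of_lt_of_le (lt_of_le_of_lt hab hac) hcJ
      rcases lt_or_ge a' (J a' b') with h | h
      · exact le_trans hcJ (hU a b a' b' hab hbb haU h)
      · exact absurd (hUD a b a' b' hab hbb haU h) (not_le.mpr (lt_of_lt_of_le hac hcJ))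
    · intro hca hJc
      have haD : J a' b' < a' := lt_of_lt_of_le hJc (le_trans hca hab)
      rcases lt_or_ge (J a b) a with h | h
      · exact lt_of_le_of_lt (hD a b a' b' hab hbb h haD) hJc
      · exact absurd (hND a b a' b' hab hbb h haD) (not_le.mpr (lt_of_lt_of_le hJc hca))
  · intro H
    refine ⟨?_, ?_, ?_, ?_⟩
    · intro a₁ b₁ a₂ b₂ ha hb h1 h2
      by_contra hlt
      push_neg at hlt
      have hle : (J a₂ b₂ : ℕ) + 1 < n + 1 := by
        have := (Fin.lt_def.mp hlt); have := (J a₁ b₁).isLt; omega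
      set c : Fin (n+1) := ⟨(J a₂ b₂ : ℕ) + 1, hle⟩ with hc
      have h := (H a₁ a₂ b₁ b₂ c ha hb).1
        (by rw [Fin.lt_def]; have := Fin.lt_def.mp h2; simp [hc]; omega)
        (by rw [Fin.le_def]; have := Fin.lt_def.mp hlt; simp [hc]; omega)
      rw [Fin.le_def] at h; simp [hc] at h
    · intro a₁ b₁ a₂ b₂ ha hb h1 h2
      by_contra hlt
      push_neg at hlt
      exact absurd ((H a₁ a₂ b₁ b₂ (J a₁ b₁) ha hb).2 (le_of_lt h1) hlt) (lt_irrefl _)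
    · intro a₁ b₁ a₂ b₂ ha hb h1 h2
      by_contra hlt
      push_neg at hlt
      have hle : (a₂ : ℕ) + 1 < n + 1 := by
        have := (Fin.lt_def.mp hlt); have := (J a₁ b₁).isLt; omega
      set c : Fin (n+1) := ⟨(a₂ : ℕ) + 1, hle⟩ with hc
      have h := (H a₁ a₂ b₁ b₂ c ha hb).1
        (by rw [Fin.lt_def]; simp [hc])
        (by rw [Fin.le_def]; have := Fin.lt_def.mp hlt; simp [hc]; omega)
      rw [Fin.le_def] at h; simp [hc] at h
      have h2' := Fin.le_def.mp h2; omega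
    · intro a₁ b₁ a₂ b₂ ha hb h1 h2
      by_contra hlt
      push_neg at hlt
      exact absurd ((H a₁ a₂ b₁ b₂ a₁ ha hb).2 le_rfl hlt) (not_lt.mpr h1)
end

section
/- Let J be an attractive interaction map on S and suppose rate parameters λ_{ab} ≥ 0 satisfy, for all configurations η ≤ ξ and sites x, y: λ_{η(x)η(y)} ≤ λ_{ξ(x)ξ(y)} whenever (η(x),η(y)) ∈ U and J(η(x),η(y)) > ξ(x), and λ_{η(x)η(y)} ≥ λ_{ξ(x)ξ(y)} whenever (ξ(x),ξ(y)) ∈ D and J(ξ(x),ξ(y)) < η(x). Then in the basic coupling with coupled rate r̃ = min(r_{1u}, r_{2u}) + min(r_{1d}, r_{2d}), for every ordered pair η ≤ ξ, all transitions with strictly positive rate lead to an ordered pair. Formally: (i) if ξ(x) < J(η(x),η(y)) then r_u(η,x,y) − min(r_u(η,x,y), r_u(ξ,x,y)) = 0; (ii) if J(ξ(x),ξ(y)) < η(x) then r_d(ξ,x,y) − min(r_d(η,x,y), r_d(ξ,x,y)) = 0; (iii) every joint transition (η,ξ) → (η^{xy}, ξ^{xy}) with r̃ > 0 yields η^{xy}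 ≤ ξ^{xy}. -/
/-- The up transition rate of an interaction map system. -/
def ru {n : ℕ} {Λ : Type*} (J : Fin (n+1) → Fin (n+1) → Fin (n+1))
    (lam : Fin (n+1) → Fin (n+1) → ℝ) (φ : Λ → Λ → ℝ)
    (η : Λ → Fin (n+1)) (x y : Λ) : ℝ :=
  if η x < J (η x) (η y) then lam (η x) (η y) * φ x y else 0

/-- The down transition rate of an interaction map system. -/
def rd {n : ℕ} {Λ : Type*} (J : Fin (n+1) → Fin (n+1) → Fin (n+1))
    (lam : Fin (n+1) → Fin (n+1) → ℝ) (φ : Λ → Λ → ℝ)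
    (η : Λ → Fin (n+1)) (x y : Λ) : ℝ :=
  if J (η x) (η y) < η x then lam (η x) (η y) * φ x y else 0

/-- In the basic coupling of an attractive interaction map system, all transitions with
strictly positive rate lead from ordered pairs to ordered pairs. -/
theorem stmt_15 {n : ℕ} {Λ : Type*} [DecidableEq Λ]
    (J : Fin (n+1) → Fin (n+1) → Fin (n+1))
    (lam : Fin (n+1) → Fin (n+1) → ℝ) (φ : Λ → Λ → ℝ)
    (hJ : Attractive J) (hlam : ∀ a b, 0 ≤ lam a b) (hφ : ∀ x y, 0 ≤ φ x y)
    (hup : ∀ (η ξ : Λ → Fin (n+1)) (x y : Λ), (∀ z, η z ≤ ξ z) →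
      η x < J (η x) (η y) → ξ x < J (η x) (η y) →
      lam (η x) (η y) ≤ lam (ξ x) (ξ y))
    (hdown : ∀ (η ξ : Λ → Fin (n+1)) (x y : Λ), (∀ z, η z ≤ ξ z) →
      J (ξ x) (ξ y) < ξ x → J (ξ x) (ξ y) < η x →
      lam (η x) (η y) ≥ lam (ξ x) (ξ y)) :
    ∀ (η ξ : Λ → Fin (n+1)) (x y : Λ), (∀ z, η z ≤ ξ z) →
      ((ξ x < J (η x) (η y) →
        ru J lam φ η x y - min (ru J lam φ η x y) (ru J lam φ ξ x y) = 0) ∧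
       (J (ξ x) (ξ y) < η x →
        rd J lam φ ξ x y - min (rd J lam φ η x y) (rd J lam φ ξ x y) = 0) ∧
       (0 < min (ru J lam φ η x y) (ru J lam φ ξ x y)
          + min (rd J lam φ η x y) (rd J lam φ ξ x y) →
        ∀ z, Function.update η x (J (η x) (η y)) z ≤
          Function.update ξ x (J (ξ x) (ξ y)) z)) := by
  obtain ⟨hJ1, hJ2, hJ3, hJ4⟩ := hJ
  intro η ξ x y hle
  have runn : ∀ ζ : Λ → Fin (n+1), 0 ≤ ru J lam φ ζ x y := by
    intro ζ; unfold ru; split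
    · exact mul_nonneg (hlam _ _) (hφ x y)
    · exact le_rfl
  have rdnn : ∀ ζ : Λ → Fin (n+1), 0 ≤ rd J lam φ ζ x y := by
    intro ζ; unfold rd; split
    · exact mul_nonneg (hlam _ _) (hφ x y)
    · exact le_rfl
  refine ⟨?_, ?_, ?_⟩
  · intro h
    have hη : η x < J (η x) (η y) := lt_of_le_of_lt (hle x) h
    have hξ : ξ x < J (ξ x) (ξ y) := by
      by_contra hc
      push_neg at hc
      exact absurd (hJ3 _ _ _ _ (hle x) (hle y) hη hc) (not_le.mpr h)
    have hr : ru J lam φ η x y ≤ ru J lam φ ξ x y := by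
      simp only [ru, if_pos hη, if_pos hξ]
      exact mul_le_mul_of_nonneg_right (hup η ξ x y hle hη h) (hφ x y)
    rw [min_eq_left hr]; ring
  · intro h
    have hξ : J (ξ x) (ξ y) < ξ x := lt_of_lt_of_le h (hle x)
    have hη : J (η x) (η y) < η x := by
      by_contra hc
      push_neg at hc
      exact absurd (hJ4 _ _ _ _ (hle x) (hle y) hc hξ) (not_le.mpr h)
    have hr : rd J lam φ ξ x y ≤ rd J lam φ η x y := by
      simp only [rd, if_pos hη, if_pos hξ]
      exact mul_le_mul_of_nonneg_right (hdown η ξ x y hle hξ h) (hφ x y)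
    rw [min_eq_right hr]; ring
  · intro hpos z
    have key : J (η x) (η y) ≤ J (ξ x) (ξ y) := by
      rcases lt_or_ge 0 (min (ru J lam φ η x y) (ru J lam φ ξ x y)) with hu | hu
      · have h1 : 0 < ru J lam φ η x y := lt_of_lt_of_le hu (min_le_left _ _)
        have h2 : 0 < ru J lam φ ξ x y := lt_of_lt_of_le hu (min_le_right _ _)
        have hη : η x < J (η x) (η y) := by
          by_contra hc; unfold ru at h1; rw [if_neg hc] at h1; exact lt_irrefl 0 h1
        have hξ : ξ x < J (ξ x) (ξ y) := by
          by_contra hc; unfold ru at h2; rw [if_neg hc] at h2; exact lt_irrefl 0 h2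
        exact hJ1 _ _ _ _ (hle x) (hle y) hη hξ
      · have hd : 0 < min (rd J lam φ η x y) (rd J lam φ ξ x y) := by
          by_contra hc
          push_neg at hc
          linarith
        have h1 : 0 < rd J lam φ η x y := lt_of_lt_of_le hd (min_le_left _ _)
        have h2 : 0 < rd J lam φ ξ x y := lt_of_lt_of_le hd (min_le_right _ _)
        have hη : J (η x) (η y) < η x := by
          by_contra hc; unfold rd at h1; rw [if_neg hc] at h1; exact lt_irrefl 0 h1
        have hξ : J (ξ x) (ξ y) < ξ x := by
          by_contra hc; unfold rd at h2; rw [if_neg hc] at h2; exact lt_irrefl 0 h2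
        exact hJ2 _ _ _ _ (hle x) (hle y) hη hξ
    rcases eq_or_ne z x with rfl | hz
    · simpa using key
    · simpa [Function.update_of_ne hz] using hle z
end

section
/- Let J be an attractive interaction map on S, let x, y be sites of Λ, and for u ≥ 0 define the single update maps F_u^{up}, F_u^{down} : S^Λ → S^Λ, applied simultaneously (graphical-coupling style) to all configurations, by F_u^{up}(η) = η^{xy} if η(x) < J(η(x),η(y)) and u ≤ λ_{η(x)η(y)}, else η; and F_u^{down}(η) = η^{xy} if J(η(x),η(y)) < η(x) and u ≤ λ_{η(x)η(y)}, else η. Suppose the rate parameters satisfy λ_{ab} ≤ λ_{a'b'} whenever (a,b) ≤ (a',b'), (a,b) ∈ U, and J(a,b) > a', and λ_{ab} ≥ λ_{a'b'} whenever (a,b) ≤ (a',b'), (a',b') ∈ D, and J(a',b') < a. Then F_u^{up} and F_u^{down} are monotone: η ≤ ξ implies F_u^{up}(η) ≤ F_u^{up}(ξ) and F_u^{down}(η) ≤ F_u^{down}(ξ). -/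
open Classical in
/-- The gated up update map of the graphical coupling at sites x, y with mark u. -/
noncomputable def Fup {n : ℕ} {Λ : Type*} [DecidableEq Λ]
    (J : Fin (n+1) → Fin (n+1) → Fin (n+1)) (lam : Fin (n+1) → Fin (n+1) → ℝ)
    (x y : Λ) (u : ℝ) (η : Λ → Fin (n+1)) : Λ → Fin (n+1) :=
  if η x < J (η x) (η y) ∧ u ≤ lam (η x) (η y) then
    Function.update η x (J (η x) (η y)) else η

open Classical in
/-- The gated down update map of the graphical coupling at sites x, y with mark u. -/
noncomputable def Fdown {n : ℕ} {Λ : Type*} [DecidableEq Λ]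
    (J : Fin (n+1) → Fin (n+1) → Fin (n+1)) (lam : Fin (n+1) → Fin (n+1) → ℝ)
    (x y : Λ) (u : ℝ) (η : Λ → Fin (n+1)) : Λ → Fin (n+1) :=
  if J (η x) (η y) < η x ∧ u ≤ lam (η x) (η y) then
    Function.update η x (J (η x) (η y)) else η

/-- For an attractive interaction map with attractive rate parameters, the gated up and down
update maps of the graphical coupling are monotone. -/
theorem stmt_17 {n : ℕ} {Λ : Type*} [DecidableEq Λ]
    (J : Fin (n+1) → Fin (n+1) → Fin (n+1)) (lam : Fin (n+1) → Fin (n+1) → ℝ)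
    (x y : Λ) (hJ : Attractive J) (hlam : ∀ a b, 0 ≤ lam a b)
    (hup : ∀ a b a' b' : Fin (n+1), a ≤ a' → b ≤ b' →
      a < J a b → a' < J a b → lam a b ≤ lam a' b')
    (hdown : ∀ a b a' b' : Fin (n+1), a ≤ a' → b ≤ b' →
      J a' b' < a' → J a' b' < a → lam a' b' ≤ lam a b) :
    ∀ u : ℝ, 0 ≤ u → ∀ η ξ : Λ → Fin (n+1), (∀ z, η z ≤ ξ z) →
      (∀ z, Fup J lam x y u η z ≤ Fup J lam x y u ξ z) ∧
      (∀ z, Fdown J lam x y u η z ≤ Fdown J lam x y u ξ z) := by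
  obtain ⟨h1, h2, h3, h4⟩ := hJ
  intro u hu η ξ hle
  constructor
  · intro z
    unfold Fup
    by_cases z = x
    case neg hz =>
      split <;> split <;> (try simp only [Function.update_of_ne hz]) <;> exact hle z
    case pos hz =>
      subst hz
      split
      case isTrue hη =>
        split
        case isTrue hξ =>
          simp only [Function.update_self]
          exact h1 _ _ _ _ (hle z) (hle y) hη.1 hξ.1
        case isFalse hξ =>
          simp only [Function.update_self]
          by_cases hx : ξ z < J (ξ z) (ξ y)
          · by_cases hx2 : J (η z) (η y) ≤ ξ z
            · exact hx2
            · exact absurd ⟨hx, le_trans hη.2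
                (hup _ _ _ _ (hle z) (hle y) hη.1 (lt_of_not_ge hx2))⟩ hξ
          · exact h3 _ _ _ _ (hle z) (hle y) hη.1 (le_of_not_gt hx)
      case isFalse hη =>
        split
        case isTrue hξ =>
          simp only [Function.update_self]
          exact le_of_lt (lt_of_le_of_lt (hle z) hξ.1)
        case isFalse hξ => exact hle z
  · intro z
    unfold Fdown
    by_cases z = x
    case neg hz =>
      split <;> split <;> (try simp only [Function.update_of_ne hz]) <;> exact hle z
    case pos hz =>
      subst hz
      split
      case isTrue hη =>
        split
        case isTrue hξ =>
          simp only [Function.update_self]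
          exact h2 _ _ _ _ (hle z) (hle y) hη.1 hξ.1
        case isFalse hξ =>
          simp only [Function.update_self]
          exact le_trans (le_of_lt hη.1) (hle z)
      case isFalse hη =>
        split
        case isTrue hξ =>
          simp only [Function.update_self]
          by_cases hx : J (η z) (η y) < η z
          · by_cases hx2 : η z ≤ J (ξ z) (ξ y)
            · exact hx2
            · exact absurd ⟨hx, le_trans hξ.2
                (hdown _ _ _ _ (hle z) (hle y) hξ.1 (lt_of_not_ge hx2))⟩ hη
          · exact h4 _ _ _ _ (hle z) (hle y) (le_of_not_gt hx) hξ.1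
        case isFalse hξ => exact hle z
end
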